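/- arXiv:1101.5250 — 2 statements merged into one kernel-verified Lean document; each statement's English description precedes it below -/
import Mathlib

section
/- (Strip-decomposition generating function of a pair of broken ribbons) Let λ ⊆ λ⁺ and μ⁻ ⊆ μ be partitions such that λ⁺/λ and μ/μ⁻ are broken ribbons. Then in the polynomial ring ℤ[q]: Σ_{λ',μ'} (−1)^{|μ/μ⁻|} (−q)^{|λ⁺/λ'| + |μ'/μ⁻|} = (−1)^{|μ/μ⁻|} (−q)^{hgt(λ⁺/λ)+wt(μ/μ⁻)} (1−q)^{rib(λ⁺/λ)+rib(μ/μ⁻)}, where the sum on the left runs over all pairs of partitions (λ',μ') with λ ⊆ λ' ⊆ λ⁺ and μ⁻ ⊆ μ' ⊆ μ such that λ'/λ and μ'/μ⁻ are horizontal strips and λ⁺/λ' and μ/μ' are vertical strips. -/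
open scoped Classical

noncomputable section

/-- The cells of the skew diagram `lam / mu`. -/
def skewCells (mu lam : YoungDiagram) : Finset (ℕ × ℕ) := lam.cells \ mu.cells

/-- The size `|lam / mu|` of the skew diagram. -/
def skewSize (mu lam : YoungDiagram) : ℕ := (skewCells mu lam).card

/-- `lam/mu` is a horizontal strip: no vertical domino. -/
def IsHorizontalStrip (mu lam : YoungDiagram) : Prop :=
  ∀ i j : ℕ, ¬((i, j) ∈ skewCells mu lam ∧ (i + 1, j) ∈ skewCells mu lam)

/-- `lam/mu` is a vertical strip: no horizontal domino. -/
def IsVerticalStrip (mu lam : YoungDiagram) : Prop :=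
  ∀ i j : ℕ, ¬((i, j) ∈ skewCells mu lam ∧ (i, j + 1) ∈ skewCells mu lam)

/-- `lam/mu` is a broken ribbon: no 2×2 block. -/
def IsBrokenRibbon (mu lam : YoungDiagram) : Prop :=
  ∀ i j : ℕ, ¬((i, j) ∈ skewCells mu lam ∧ (i, j + 1) ∈ skewCells mu lam ∧
      (i + 1, j) ∈ skewCells mu lam ∧ (i + 1, j + 1) ∈ skewCells mu lam)

/-- Edge-adjacency of lattice cells. -/
def CellAdj (c d : ℕ × ℕ) : Prop :=
  (c.1 = d.1 ∧ (c.2 = d.2 + 1 ∨ d.2 = c.2 + 1)) ∨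
  (c.2 = d.2 ∧ (c.1 = d.1 + 1 ∨ d.1 = c.1 + 1))

/-- The setoid relating cells in the same edge-connected component of `S`. -/
def componentSetoid (S : Finset (ℕ × ℕ)) : Setoid {c : ℕ × ℕ // c ∈ S} :=
  Relation.EqvGen.setoid (fun x y => CellAdj x.1 y.1)

/-- Edge-connected components of a finite set of cells. -/
def SkewComponents (S : Finset (ℕ × ℕ)) : Type := Quotient (componentSetoid S)

/-- The number of edge-connected components of `S`. -/
def ribSet (S : Finset (ℕ × ℕ)) : ℕ := Nat.card (SkewComponents S)

/-- Pairs (component of `S`, index of a nonempty row of that component). -/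
def componentRowPairs (S : Finset (ℕ × ℕ)) : Type :=
  {p : SkewComponents S × ℕ //
    ∃ c : {c : ℕ × ℕ // c ∈ S}, Quotient.mk (componentSetoid S) c = p.1 ∧ c.1.1 = p.2}

/-- Pairs (component of `S`, index of a nonempty column of that component). -/
def componentColPairs (S : Finset (ℕ × ℕ)) : Type :=
  {p : SkewComponents S × ℕ //
    ∃ c : {c : ℕ × ℕ // c ∈ S}, Quotient.mk (componentSetoid S) c = p.1 ∧ c.1.2 = p.2}

/-- Sum over components of (number of nonempty rows − 1). -/
def hgtSet (S : Finset (ℕ × ℕ)) : ℕ := Nat.card (componentRowPairs S) - ribSet S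

/-- Sum over components of (number of nonempty columns − 1). -/
def wtSet (S : Finset (ℕ × ℕ)) : ℕ := Nat.card (componentColPairs S) - ribSet S

/-- rib(lam/mu): number of ribbon components of the broken ribbon `lam/mu`. -/
def rib (mu lam : YoungDiagram) : ℕ := ribSet (skewCells mu lam)

/-- hgt(lam/mu). -/
def hgt (mu lam : YoungDiagram) : ℕ := hgtSet (skewCells mu lam)

/-- wt(lam/mu). -/
def wt (mu lam : YoungDiagram) : ℕ := wtSet (skewCells mu lam)

/-- `lam/mu` is a ribbon: nonempty, no 2×2 block, and edge-connected. -/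
def IsRibbon (mu lam : YoungDiagram) : Prop :=
  0 < skewSize mu lam ∧ IsBrokenRibbon mu lam ∧ rib mu lam = 1

/-- A semistandard Young tableau of skew shape `lam/mu`: a filling of the skew cells
with positive integers, weakly increasing along rows, strictly increasing down columns
(and `0`, i.e. no entry, outside the skew cells). -/
structure SkewSSYT (mu lam : YoungDiagram) where
  entry : ℕ × ℕ → ℕ
  zeros : ∀ c, c ∉ skewCells mu lam → entry c = 0
  pos : ∀ c ∈ skewCells mu lam, 1 ≤ entry c
  rowWeak : ∀ i j, (i, j) ∈ skewCells mu lam → (i, j + 1) ∈ skewCells mu lam →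
    entry (i, j) ≤ entry (i, j + 1)
  colStrict : ∀ i j, (i, j) ∈ skewCells mu lam → (i + 1, j) ∈ skewCells mu lam →
    entry (i, j) < entry (i + 1, j)

/-- The number of cells of the tableau `T` with entry `v`. -/
def countEntry {mu lam : YoungDiagram} (T : SkewSSYT mu lam) (v : ℕ) : ℕ :=
  ((skewCells mu lam).filter (fun c => T.entry c = v)).card

/-- The skew Schur function `s_{lam/mu}`, as a formal power series in variables
`x_1, x_2, …` (variable index `n : ℕ` standing for `x_{n+1}`): the coefficient of
`x_1^(d 0) x_2^(d 1) ⋯` is the number of SSYT of shape `lam/mu` in which entry `i`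
occurs exactly `d (i-1)` times. -/
def skewSchur (R : Type*) [CommRing R] (mu lam : YoungDiagram) : MvPowerSeries ℕ R :=
  fun d => (Nat.card {T : SkewSSYT mu lam // ∀ n : ℕ, countEntry T (n + 1) = d n} : R)

/-- The power sum symmetric function `p_r = x_1^r + x_2^r + ⋯`. -/
def powerSum (R : Type*) [CommRing R] (r : ℕ) : MvPowerSeries ℕ R :=
  fun d => if ∃ n : ℕ, d = Finsupp.single n r then 1 else 0

/-- The quantum power sum `℘_r = ∑_{τ ⊢ r} (-1)^{ℓ(τ)-1} (q-1)^{ℓ(τ)-1} m_τ`,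
written coefficientwise: the coefficient at a monomial with exponent vector `d`
of total degree `r` is `(-1)^{ℓ-1} (q-1)^{ℓ-1}` where `ℓ` is the number of
variables occurring in the monomial. -/
def qps (r : ℕ) : MvPowerSeries ℕ (Polynomial ℤ) :=
  fun d => if (d.sum fun _ v => v) = r then
      (-1 : Polynomial ℤ) ^ (d.support.card - 1) * (Polynomial.X - 1) ^ (d.support.card - 1)
    else 0

/-- The second quantum power sum `p̄_r = ∑_{τ ⊢ r} q^{r-ℓ(τ)} (q-1)^{ℓ(τ)-1} m_τ`. -/
def qps2 (r : ℕ) : MvPowerSeries ℕ (Polynomial ℤ) :=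
  fun d => if (d.sum fun _ v => v) = r then
      (Polynomial.X : Polynomial ℤ) ^ (r - d.support.card) *
        (Polynomial.X - 1) ^ (d.support.card - 1)
    else 0

/-- The one-row Young diagram `(r)`. -/
def rowDiagram (r : ℕ) : YoungDiagram := YoungDiagram.ofRowLens [r] (List.sortedGE_iff_pairwise.mpr (List.pairwise_singleton _ r))

/-- The one-column Young diagram `(1^r)`. -/
def colDiagram (r : ℕ) : YoungDiagram := (rowDiagram r).transpose

theorem sorted_replicate_one (m : ℕ) : List.Pairwise (· ≥ ·) (List.replicate m (1 : ℕ)) := by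
  induction m with
  | zero => simp
  | succ n ih =>
    rw [List.replicate_succ, List.pairwise_cons]
    exact ⟨fun b hb => le_of_eq (List.eq_of_mem_replicate hb), ih⟩

/-- The hook Young diagram `(a+1, 1^m)`. -/
def hookDiagram' (a m : ℕ) : YoungDiagram :=
  YoungDiagram.ofRowLens ((a + 1) :: List.replicate m 1) (by
    rw [List.sortedGE_iff_pairwise, List.pairwise_cons]
    exact ⟨fun b hb => le_trans (le_of_eq (List.eq_of_mem_replicate hb)) (Nat.le_add_left 1 a),
      sorted_replicate_one m⟩)

/-! Split the cells of the broken ribbon `lam / mu` into those with a right neighbour (`H`),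
those with an upper neighbour (`V`, disjoint from `H` as there is no 2×2 block) and the rest,
which are the north-east ends of the ribbon components. The strip decompositions
`mu ⊆ nu ⊆ lam` are exactly the diagrams with `H ⊆ nu / mu ⊆ (lam / mu) \ V`, whence
`∑ x ^ |nu / mu| * y ^ |lam / nu| = x ^ |H| * y ^ |V| * (x + y) ^ rib`; and `|H| = wt`,
`|V| = hgt` because each row and each column of a skew shape is an interval, hence lies in a
single component. The theorem multiplies this identity at `(x, y) = (1, -q)` and `(-q, 1)`. -/

open Finset

section SkewCells

variable {mu nu lam : YoungDiagram}

theorem mem_skewCells {c : ℕ × ℕ} : c ∈ skewCells mu lam ↔ c ∈ lam ∧ c ∉ mu := by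
  simp [skewCells, YoungDiagram.mem_cells]

theorem ordConnected_skewCells (mu lam : YoungDiagram) :
    (skewCells mu lam : Set (ℕ × ℕ)).OrdConnected := by
  rw [skewCells, coe_sdiff, Set.sdiff_eq]
  exact lam.isLowerSet.ordConnected.inter mu.isLowerSet.compl.ordConnected

theorem skewCells_subset_skewCells_left (h : mu ≤ nu) : skewCells nu lam ⊆ skewCells mu lam :=
  sdiff_subset_sdiff subset_rfl (YoungDiagram.cells_subset_iff.2 h)

theorem skewCells_subset_skewCells_right (h : nu ≤ lam) : skewCells mu nu ⊆ skewCells mu lam :=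
  sdiff_subset_sdiff (YoungDiagram.cells_subset_iff.2 h) subset_rfl

theorem cells_eq_union_skewCells (h : mu ≤ nu) : nu.cells = mu.cells ∪ skewCells mu nu :=
  (union_sdiff_of_subset (YoungDiagram.cells_subset_iff.2 h)).symm

theorem skewCells_eq_sdiff_skewCells (h : mu ≤ nu) :
    skewCells nu lam = skewCells mu lam \ skewCells mu nu := by
  ext c
  simp only [mem_sdiff, mem_skewCells]
  have hmn : c ∈ mu → c ∈ nu := fun hc => h hc
  tauto

end SkewCells

section Components

variable (S : Finset (ℕ × ℕ))

def cellsWithRightNeighbor : Finset (ℕ × ℕ) := S.filter fun c => (c.1, c.2 + 1) ∈ S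

def cellsWithUpperNeighbor : Finset (ℕ × ℕ) := S.filter fun c => 0 < c.1 ∧ (c.1 - 1, c.2) ∈ S

def northeastEnds : Finset (ℕ × ℕ) := (S \ cellsWithRightNeighbor S) \ cellsWithUpperNeighbor S

def component (c : {c : ℕ × ℕ // c ∈ S}) : SkewComponents S := Quotient.mk (componentSetoid S) c

def northeastEnd (c : ℕ × ℕ) : ℕ × ℕ :=
  if h : (c.1, c.2 + 1) ∈ S then northeastEnd (c.1, c.2 + 1)
  else if h' : 0 < c.1 ∧ (c.1 - 1, c.2) ∈ S then northeastEnd (c.1 - 1, c.2)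
  else c
termination_by (c.1, S.sup Prod.snd - c.2)
decreasing_by
  · have : c.2 + 1 ≤ S.sup Prod.snd := le_sup (f := Prod.snd) h
    exact Prod.Lex.right _ (by omega)
  · exact Prod.Lex.left _ _ (by omega)

variable {S}

theorem mem_northeastEnds {c : ℕ × ℕ} :
    c ∈ northeastEnds S ↔
      c ∈ S ∧ (c.1, c.2 + 1) ∉ S ∧ ¬(0 < c.1 ∧ (c.1 - 1, c.2) ∈ S) := by
  simp only [northeastEnds, cellsWithRightNeighbor, cellsWithUpperNeighbor, mem_sdiff,
    mem_filter]
  tauto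

theorem northeastEnd_of_right_mem {c : ℕ × ℕ} (h : (c.1, c.2 + 1) ∈ S) :
    northeastEnd S c = northeastEnd S (c.1, c.2 + 1) := by
  rw [northeastEnd, dif_pos h]

theorem northeastEnd_of_upper_mem' {c : ℕ × ℕ} (hright : (c.1, c.2 + 1) ∉ S)
    (hupper : 0 < c.1 ∧ (c.1 - 1, c.2) ∈ S) :
    northeastEnd S c = northeastEnd S (c.1 - 1, c.2) := by
  rw [northeastEnd, dif_neg hright, dif_pos hupper]

theorem northeastEnd_of_upper_mem
    (hS : Disjoint (cellsWithRightNeighbor S) (cellsWithUpperNeighbor S)) {c : ℕ × ℕ}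
    (hc : c ∈ S) (hpos : 0 < c.1) (h : (c.1 - 1, c.2) ∈ S) :
    northeastEnd S c = northeastEnd S (c.1 - 1, c.2) := by
  have hright : (c.1, c.2 + 1) ∉ S := fun hr =>
    disjoint_left.1 hS (mem_filter.2 ⟨hc, hr⟩) (mem_filter.2 ⟨hc, hpos, h⟩)
  exact northeastEnd_of_upper_mem' hright ⟨hpos, h⟩

theorem northeastEnd_eq_self {c : ℕ × ℕ} (hc : c ∈ northeastEnds S) : northeastEnd S c = c := by
  obtain ⟨-, hright, hupper⟩ := mem_northeastEnds.1 hc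
  rw [northeastEnd, dif_neg hright, dif_neg hupper]

theorem northeastEnd_mem_northeastEnds {c : ℕ × ℕ} (hc : c ∈ S) :
    northeastEnd S c ∈ northeastEnds S := by
  induction c using northeastEnd.induct S with
  | case1 c h ih => rw [northeastEnd_of_right_mem h]; exact ih h
  | case2 c h h' ih => rw [northeastEnd_of_upper_mem' h h']; exact ih h'.2
  | case3 c h h' => rw [northeastEnd, dif_neg h, dif_neg h']; exact mem_northeastEnds.2 ⟨hc, h, h'⟩

theorem component_eq_of_cellAdj {c d : {c : ℕ × ℕ // c ∈ S}} (h : CellAdj c.1 d.1) :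
    component S c = component S d :=
  Quotient.sound (Relation.EqvGen.rel _ _ h)

theorem component_congr {c d : {c : ℕ × ℕ // c ∈ S}} (h : c.1 = d.1) :
    component S c = component S d :=
  congrArg _ (Subtype.ext h)

theorem component_northeastEnd {c : ℕ × ℕ} (hc : c ∈ S) :
    component S ⟨northeastEnd S c, (mem_northeastEnds.1 (northeastEnd_mem_northeastEnds hc)).1⟩ =
      component S ⟨c, hc⟩ := by
  induction c using northeastEnd.induct S with
  | case1 c h ih =>
    exact (component_congr (northeastEnd_of_right_mem h)).trans
      ((ih h).trans (component_eq_of_cellAdj (Or.inl ⟨rfl, Or.inl rfl⟩)))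
  | case2 c h h' ih =>
    have hadj : CellAdj (c.1 - 1, c.2) c := Or.inr ⟨rfl, Or.inr (Nat.sub_add_cancel h'.1).symm⟩
    exact (component_congr (northeastEnd_of_upper_mem' h h')).trans
      ((ih h'.2).trans (component_eq_of_cellAdj hadj))
  | case3 c h h' => exact component_congr (northeastEnd_eq_self (mem_northeastEnds.2 ⟨hc, h, h'⟩))

end Components

section UpperNeighbor

variable {S : Finset (ℕ × ℕ)}

theorem exists_of_mem_cellsWithUpperNeighbor {c : ℕ × ℕ} (h : c ∈ cellsWithUpperNeighbor S) :
    ∃ i j, c = (i + 1, j) ∧ (i + 1, j) ∈ S ∧ (i, j) ∈ S := by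
  obtain ⟨hc, hpos, hup⟩ := mem_filter.1 h
  obtain ⟨_ | i, j⟩ := c
  · exact absurd hpos (lt_irrefl 0)
  · exact ⟨i, j, rfl, hc, hup⟩

theorem succ_mem_cellsWithUpperNeighbor {i j : ℕ} (h : (i + 1, j) ∈ S) (h' : (i, j) ∈ S) :
    (i + 1, j) ∈ cellsWithUpperNeighbor S :=
  mem_filter.2 ⟨h, Nat.succ_pos i, h'⟩

theorem mem_of_le_of_mem_of_subset (hS : (S : Set (ℕ × ℕ)).OrdConnected) {T : Finset (ℕ × ℕ)}
    (hH : cellsWithRightNeighbor S ⊆ T) (hV : T ⊆ S \ cellsWithUpperNeighbor S) {a b : ℕ × ℕ}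
    (hb : b ∈ S) (hba : b ≤ a) (ha : a ∈ T) : b ∈ T := by
  obtain ⟨haS, haV⟩ := mem_sdiff.1 (hV ha)
  rcases hba.2.lt_or_eq with h₂ | h₂
  · exact hH (mem_filter.2 ⟨hb, hS.out hb haS ⟨⟨le_rfl, Nat.le_succ _⟩, ⟨hba.1, h₂⟩⟩⟩)
  rcases hba.1.lt_or_eq with h₁ | h₁
  · exact absurd (mem_filter.2 ⟨haS, by omega,
      hS.out hb haS ⟨⟨Nat.le_sub_one_of_lt h₁, h₂.le⟩, ⟨Nat.sub_le _ _, le_rfl⟩⟩⟩) haV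
  · rwa [show b = a from Prod.ext h₁ h₂]

end UpperNeighbor

section Counting

variable {S : Finset (ℕ × ℕ)}

theorem northeastEnd_eq_of_cellAdj
    (hS : Disjoint (cellsWithRightNeighbor S) (cellsWithUpperNeighbor S)) {c d : ℕ × ℕ}
    (hc : c ∈ S) (hd : d ∈ S) (h : CellAdj c d) : northeastEnd S c = northeastEnd S d := by
  obtain ⟨a, b⟩ := c
  obtain ⟨a', b'⟩ := d
  rcases h with ⟨h₁, h₂ | h₂⟩ | ⟨h₁, h₂ | h₂⟩ <;> simp only at h₁ h₂ <;> subst h₁ h₂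
  · exact (northeastEnd_of_right_mem (c := (a, b')) hc).symm
  · exact northeastEnd_of_right_mem hd
  · exact northeastEnd_of_upper_mem hS hc (Nat.succ_pos a') hd
  · exact (northeastEnd_of_upper_mem hS hd (Nat.succ_pos a) hc).symm

theorem northeastEnd_eq_of_component_eq
    (hS : Disjoint (cellsWithRightNeighbor S) (cellsWithUpperNeighbor S))
    {c d : {c : ℕ × ℕ // c ∈ S}} (h : component S c = component S d) :
    northeastEnd S c.1 = northeastEnd S d.1 := by
  have hrel : Relation.EqvGen (fun x y : {c // c ∈ S} => CellAdj x.1 y.1) c d := Quotient.exact h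
  clear h
  induction hrel with
  | rel x y hxy => exact northeastEnd_eq_of_cellAdj hS x.2 y.2 hxy
  | refl => rfl
  | symm _ _ _ ih => exact ih.symm
  | trans _ _ _ _ _ ih₁ ih₂ => exact ih₁.trans ih₂

/-- `northeastEnd` is constant on components, so it retracts each component onto a single cell
of `northeastEnds S`. -/
theorem ribSet_eq_card_northeastEnds
    (hS : Disjoint (cellsWithRightNeighbor S) (cellsWithUpperNeighbor S)) :
    ribSet S = #(northeastEnds S) := by
  let f : {c // c ∈ northeastEnds S} → SkewComponents S :=
    fun c => component S ⟨c.1, (mem_northeastEnds.1 c.2).1⟩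
  have hf : Function.Bijective f := by
    refine ⟨fun c d h => Subtype.ext ?_, fun q => ?_⟩
    · simpa only [northeastEnd_eq_self c.2, northeastEnd_eq_self d.2]
        using northeastEnd_eq_of_component_eq hS h
    · obtain ⟨⟨c, hc⟩, rfl⟩ := Quotient.exists_rep q
      exact ⟨⟨_, northeastEnd_mem_northeastEnds hc⟩, component_northeastEnd hc⟩
  rw [ribSet, ← Nat.card_congr (Equiv.ofBijective f hf), Nat.card_eq_finsetCard]

theorem component_eq_of_le (hS : (S : Set (ℕ × ℕ)).OrdConnected) {c d : ℕ × ℕ} (hc : c ∈ S)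
    (hd : d ∈ S) (h : c ≤ d) : component S ⟨c, hc⟩ = component S ⟨d, hd⟩ := by
  obtain ⟨n, hn⟩ : ∃ n, d.1 - c.1 + (d.2 - c.2) = n := ⟨_, rfl⟩
  induction n generalizing c with
  | zero =>
    exact component_congr (show c = d from Prod.ext (by have := h.1; omega) (by have := h.2; omega))
  | succ n ih =>
    rcases Nat.lt_or_ge c.1 d.1 with h₁ | h₁
    · have hmid : (c.1 + 1, c.2) ∈ S := hS.out hc hd ⟨⟨Nat.le_succ _, le_rfl⟩, ⟨h₁, h.2⟩⟩
      have hadj : component S ⟨c, hc⟩ = component S ⟨_, hmid⟩ :=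
        component_eq_of_cellAdj (Or.inr ⟨rfl, Or.inr rfl⟩)
      exact hadj.trans (ih hmid ⟨h₁, h.2⟩ (by simp only; omega))
    · have h₂ : c.2 < d.2 := by have := h.1; omega
      have hmid : (c.1, c.2 + 1) ∈ S := hS.out hc hd ⟨⟨le_rfl, Nat.le_succ _⟩, ⟨h.1, h₂⟩⟩
      have hadj : component S ⟨c, hc⟩ = component S ⟨_, hmid⟩ :=
        component_eq_of_cellAdj (Or.inl ⟨rfl, Or.inr rfl⟩)
      exact hadj.trans (ih hmid ⟨h.1, h₂⟩ (by simp only; omega))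

theorem natCard_componentLinePairs (line : ℕ × ℕ → ℕ) {E : Finset (ℕ × ℕ)} (hE : E ⊆ S)
    (hconn : ∀ c d : {c : ℕ × ℕ // c ∈ S}, line c.1 = line d.1 → component S c = component S d)
    (hex : ∀ c ∈ S, ∃ e ∈ E, line e = line c)
    (huniq : ∀ e ∈ E, ∀ e' ∈ E, line e = line e' → e = e') :
    Nat.card {p : SkewComponents S × ℕ // ∃ c, component S c = p.1 ∧ line c.1 = p.2} = #E := by
  let f : {e // e ∈ E} → {p : SkewComponents S × ℕ // ∃ c, component S c = p.1 ∧ line c.1 = p.2} :=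
    fun e => ⟨(component S ⟨e.1, hE e.2⟩, line e.1), ⟨_, rfl, rfl⟩⟩
  have hf : Function.Bijective f := by
    refine ⟨fun e e' h => Subtype.ext (huniq _ e.2 _ e'.2 (congrArg (·.1.2) h)), ?_⟩
    rintro ⟨p, c, hq, hk⟩
    obtain ⟨e, he, hline⟩ := hex c.1 c.2
    exact ⟨⟨e, he⟩, Subtype.ext (Prod.ext ((hconn ⟨e, hE he⟩ c hline).trans hq) (hline.trans hk))⟩
  rw [← Nat.card_congr (Equiv.ofBijective f hf), Nat.card_eq_finsetCard]

theorem natCard_componentRowPairs (hS : (S : Set (ℕ × ℕ)).OrdConnected) :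
    Nat.card (componentRowPairs S) = #(S \ cellsWithRightNeighbor S) := by
  refine natCard_componentLinePairs Prod.fst sdiff_subset (fun c d h => ?_) (fun c hc => ?_) ?_
  · rcases le_total c.1.2 d.1.2 with h' | h'
    · exact component_eq_of_le hS c.2 d.2 ⟨h.le, h'⟩
    · exact (component_eq_of_le hS d.2 c.2 ⟨h.ge, h'⟩).symm
  · obtain ⟨e, he, hmax⟩ := exists_max_image (S.filter (·.1 = c.1)) Prod.snd
      ⟨c, mem_filter.2 ⟨hc, rfl⟩⟩
    obtain ⟨heS, hrow⟩ := mem_filter.1 he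
    refine ⟨e, mem_sdiff.2 ⟨heS, fun hright => ?_⟩, hrow⟩
    have := hmax _ (mem_filter.2 ⟨(mem_filter.1 hright).2, hrow⟩)
    omega
  · suffices ∀ e ∈ S \ cellsWithRightNeighbor S, ∀ e' ∈ S, e.1 = e'.1 → e'.2 ≤ e.2 by
      intro e he e' he' h
      exact Prod.ext h (le_antisymm (this e' he' e (mem_sdiff.1 he).1 h.symm)
        (this e he e' (mem_sdiff.1 he').1 h))
    intro e he e' he' h
    by_contra! hlt
    obtain ⟨heS, hright⟩ := mem_sdiff.1 he
    exact hright (mem_filter.2 ⟨heS, hS.out heS he' ⟨⟨le_rfl, Nat.le_succ _⟩, ⟨h.le, hlt⟩⟩⟩)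

theorem natCard_componentColPairs (hS : (S : Set (ℕ × ℕ)).OrdConnected) :
    Nat.card (componentColPairs S) = #(S \ cellsWithUpperNeighbor S) := by
  refine natCard_componentLinePairs Prod.snd sdiff_subset (fun c d h => ?_) (fun c hc => ?_) ?_
  · rcases le_total c.1.1 d.1.1 with h' | h'
    · exact component_eq_of_le hS c.2 d.2 ⟨h', h.le⟩
    · exact (component_eq_of_le hS d.2 c.2 ⟨h', h.ge⟩).symm
  · obtain ⟨e, he, hmin⟩ := exists_min_image (S.filter (·.2 = c.2)) Prod.fst
      ⟨c, mem_filter.2 ⟨hc, rfl⟩⟩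
    obtain ⟨heS, hcol⟩ := mem_filter.1 he
    refine ⟨e, mem_sdiff.2 ⟨heS, fun hupper => ?_⟩, hcol⟩
    obtain ⟨-, hpos, hup⟩ := mem_filter.1 hupper
    have := hmin _ (mem_filter.2 ⟨hup, hcol⟩)
    omega
  · suffices ∀ e ∈ S \ cellsWithUpperNeighbor S, ∀ e' ∈ S, e.2 = e'.2 → e.1 ≤ e'.1 by
      intro e he e' he' h
      exact Prod.ext (le_antisymm (this e he e' (mem_sdiff.1 he').1 h)
        (this e' he' e (mem_sdiff.1 he).1 h.symm)) h
    intro e he e' he' h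
    by_contra! hlt
    obtain ⟨heS, hupper⟩ := mem_sdiff.1 he
    exact hupper (mem_filter.2 ⟨heS, by omega,
      hS.out he' heS ⟨⟨Nat.le_sub_one_of_lt hlt, h.ge⟩, ⟨Nat.sub_le _ _, le_rfl⟩⟩⟩)

theorem hgtSet_eq_card_cellsWithUpperNeighbor (hS : (S : Set (ℕ × ℕ)).OrdConnected)
    (hHV : Disjoint (cellsWithRightNeighbor S) (cellsWithUpperNeighbor S)) :
    hgtSet S = #(cellsWithUpperNeighbor S) := by
  have hV : cellsWithUpperNeighbor S ⊆ S \ cellsWithRightNeighbor S :=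
    subset_sdiff.2 ⟨filter_subset _ _, hHV.symm⟩
  have := card_sdiff_of_subset hV
  have := card_le_card hV
  rw [hgtSet, natCard_componentRowPairs hS, ribSet_eq_card_northeastEnds hHV, northeastEnds]
  omega

theorem wtSet_eq_card_cellsWithRightNeighbor (hS : (S : Set (ℕ × ℕ)).OrdConnected)
    (hHV : Disjoint (cellsWithRightNeighbor S) (cellsWithUpperNeighbor S)) :
    wtSet S = #(cellsWithRightNeighbor S) := by
  have hH : cellsWithRightNeighbor S ⊆ S \ cellsWithUpperNeighbor S :=
    subset_sdiff.2 ⟨filter_subset _ _, hHV⟩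
  have := card_sdiff_of_subset hH
  have := card_le_card hH
  rw [wtSet, natCard_componentColPairs hS, ribSet_eq_card_northeastEnds hHV, northeastEnds,
    sdiff_right_comm]
  omega

end Counting

theorem IsBrokenRibbon.disjoint {mu lam : YoungDiagram} (h : IsBrokenRibbon mu lam) :
    Disjoint (cellsWithRightNeighbor (skewCells mu lam))
      (cellsWithUpperNeighbor (skewCells mu lam)) := by
  refine disjoint_left.2 fun c hright hupper => ?_
  obtain ⟨i, j, rfl, hc, hup⟩ := exists_of_mem_cellsWithUpperNeighbor hupper
  have hc' : (i + 1, j + 1) ∈ skewCells mu lam := (mem_filter.1 hright).2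
  exact h i j ⟨hup, (ordConnected_skewCells mu lam).out hup hc'
    ⟨⟨le_rfl, Nat.le_succ _⟩, ⟨Nat.le_succ _, le_rfl⟩⟩, hc, hc'⟩

section StripDecomposition

def IsStripDecomposition (mu nu lam : YoungDiagram) : Prop :=
  mu ≤ nu ∧ nu ≤ lam ∧ IsHorizontalStrip mu nu ∧ IsVerticalStrip nu lam

variable {mu nu lam : YoungDiagram}

theorem isHorizontalStrip_iff (h : nu ≤ lam) :
    IsHorizontalStrip mu nu ↔
      skewCells mu nu ⊆ skewCells mu lam \ cellsWithUpperNeighbor (skewCells mu lam) := by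
  constructor
  · intro hh c hc
    refine mem_sdiff.2 ⟨skewCells_subset_skewCells_right h hc, fun hupper => ?_⟩
    obtain ⟨i, j, rfl, -, hup⟩ := exists_of_mem_cellsWithUpperNeighbor hupper
    have hnu : (i, j) ∈ nu := nu.up_left_mem (Nat.le_succ i) le_rfl (mem_skewCells.1 hc).1
    exact hh i j ⟨mem_skewCells.2 ⟨hnu, (mem_skewCells.1 hup).2⟩, hc⟩
  · intro hsub i j ⟨hc, hd⟩
    obtain ⟨hdS, hdV⟩ := mem_sdiff.1 (hsub hd)
    exact hdV (succ_mem_cellsWithUpperNeighbor hdS (mem_sdiff.1 (hsub hc)).1)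

theorem isVerticalStrip_iff (h : mu ≤ nu) :
    IsVerticalStrip nu lam ↔ cellsWithRightNeighbor (skewCells mu lam) ⊆ skewCells mu nu := by
  constructor
  · intro hv c hc
    obtain ⟨hcS, hrS⟩ := mem_filter.1 hc
    rw [mem_skewCells] at hcS hrS ⊢
    refine ⟨by_contra fun hcnu => ?_, hcS.2⟩
    have hr : (c.1, c.2 + 1) ∉ nu := fun hr => hcnu (nu.up_left_mem le_rfl (Nat.le_succ _) hr)
    exact hv c.1 c.2 ⟨mem_skewCells.2 ⟨hcS.1, hcnu⟩, mem_skewCells.2 ⟨hrS.1, hr⟩⟩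
  · intro hsub i j ⟨hc, hd⟩
    have := hsub (mem_filter.2 ⟨skewCells_subset_skewCells_left h hc,
      skewCells_subset_skewCells_left h hd⟩)
    exact (mem_skewCells.1 hc).2 (mem_skewCells.1 this).1

theorem exists_skewCells_eq (hle : mu ≤ lam) {T : Finset (ℕ × ℕ)}
    (hT : T ∈ Icc (cellsWithRightNeighbor (skewCells mu lam))
      (skewCells mu lam \ cellsWithUpperNeighbor (skewCells mu lam))) :
    ∃ nu, mu ≤ nu ∧ nu ≤ lam ∧ skewCells mu nu = T := by
  obtain ⟨hH, hV⟩ := mem_Icc.1 hT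
  have hTS : T ⊆ skewCells mu lam := hV.trans sdiff_subset
  have hlower : IsLowerSet (↑(mu.cells ∪ T) : Set (ℕ × ℕ)) := by
    intro a b hba ha
    rw [mem_coe, mem_union] at ha ⊢
    rcases ha with ha | ha
    · exact Or.inl (mu.isLowerSet hba ha)
    refine or_iff_not_imp_left.2 fun hb => ?_
    have hblam : b ∈ lam.cells := lam.isLowerSet hba (sdiff_subset (hTS ha))
    exact mem_of_le_of_mem_of_subset (ordConnected_skewCells mu lam) hH hV
      (mem_sdiff.2 ⟨hblam, hb⟩) hba ha
  refine ⟨⟨mu.cells ∪ T, hlower⟩, YoungDiagram.cells_subset_iff.1 subset_union_left,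
    YoungDiagram.cells_subset_iff.1 (union_subset (YoungDiagram.cells_subset_iff.2 hle)
      (hTS.trans sdiff_subset)), ?_⟩
  exact (union_sdiff_left _ _).trans
    (sdiff_eq_self_of_disjoint (disjoint_sdiff_self_left.mono_left hTS))

theorem bijOn_skewCells (hle : mu ≤ lam) :
    Set.BijOn (skewCells mu) {nu | IsStripDecomposition mu nu lam}
      ↑(Icc (cellsWithRightNeighbor (skewCells mu lam))
        (skewCells mu lam \ cellsWithUpperNeighbor (skewCells mu lam))) := by
  refine ⟨fun nu ⟨h1, h2, hh, hv⟩ => ?_, fun nu hnu nu' hnu' heq => ?_, fun T hT => ?_⟩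
  · exact mem_coe.2 (mem_Icc.2 ⟨(isVerticalStrip_iff h1).1 hv, (isHorizontalStrip_iff h2).1 hh⟩)
  · exact YoungDiagram.ext (by
      rw [cells_eq_union_skewCells hnu.1, cells_eq_union_skewCells hnu'.1, heq])
  · obtain ⟨nu, h1, h2, rfl⟩ := exists_skewCells_eq hle hT
    obtain ⟨hH, hV⟩ := mem_Icc.1 hT
    exact ⟨nu, ⟨h1, h2, (isHorizontalStrip_iff h2).2 hV, (isVerticalStrip_iff h1).2 hH⟩, rfl⟩

end StripDecomposition

theorem Finset.sum_Icc_pow_card_mul_pow {α R : Type*} [DecidableEq α] [CommSemiring R]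
    {A B C : Finset α} (hAB : A ⊆ B) (hBC : B ⊆ C) (x y : R) :
    ∑ T ∈ Icc A B, x ^ #T * y ^ (#C - #T) = x ^ #A * y ^ (#C - #B) * (x + y) ^ #(B \ A) := by
  have hdisj : ∀ U ∈ (B \ A).powerset, Disjoint A U := fun U hU =>
    disjoint_sdiff.mono_right (mem_powerset.1 hU)
  rw [Icc_eq_image_powerset hAB, sum_image fun U hU V hV hUV => ?_, ← sum_pow_mul_eq_add_pow,
    mul_sum]
  · refine sum_congr rfl fun U hU => ?_
    have := card_sdiff_of_subset hAB
    have := card_le_card hAB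
    have := card_le_card hBC
    have := card_le_card (mem_powerset.1 hU)
    rw [card_union_of_disjoint (hdisj U hU), show #C - (#A + #U) = (#C - #B) + (#(B \ A) - #U) by
      omega, pow_add, pow_add]
    ring
  · rw [← union_sdiff_cancel_left (hdisj U hU), ← union_sdiff_cancel_left (hdisj V hV)]
    exact congrArg (· \ A) hUV

theorem finsum_isStripDecomposition {R : Type*} [CommSemiring R] (x y : R)
    {mu lam : YoungDiagram} (hle : mu ≤ lam) (hbr : IsBrokenRibbon mu lam) :
    (∑ᶠ nu, if IsStripDecomposition mu nu lam then x ^ skewSize mu nu * y ^ skewSize nu lam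
      else 0) = x ^ wt mu lam * y ^ hgt mu lam * (x + y) ^ rib mu lam := by
  have hH : cellsWithRightNeighbor (skewCells mu lam) ⊆
      skewCells mu lam \ cellsWithUpperNeighbor (skewCells mu lam) :=
    subset_sdiff.2 ⟨filter_subset _ _, hbr.disjoint⟩
  have hV : cellsWithUpperNeighbor (skewCells mu lam) ⊆ skewCells mu lam := filter_subset _ _
  calc _ = ∑ᶠ nu ∈ {nu | IsStripDecomposition mu nu lam},
        x ^ skewSize mu nu * y ^ skewSize nu lam :=
        finsum_congr fun nu => finsum_eq_if.symm
    _ = ∑ᶠ T ∈ (Icc (cellsWithRightNeighbor (skewCells mu lam))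
          (skewCells mu lam \ cellsWithUpperNeighbor (skewCells mu lam)) : Set (Finset (ℕ × ℕ))),
        x ^ #T * y ^ (#(skewCells mu lam) - #T) := by
        refine finsum_mem_eq_of_bijOn _ (bijOn_skewCells hle) fun nu hnu => ?_
        have hT := mem_Icc.1 ((bijOn_skewCells hle).mapsTo hnu)
        rw [skewSize, skewSize, skewCells_eq_sdiff_skewCells hnu.1,
          card_sdiff_of_subset (hT.2.trans sdiff_subset)]
    _ = _ := by
        rw [finsum_mem_coe_finset, sum_Icc_pow_card_mul_pow hH sdiff_subset,
          card_sdiff_of_subset hV, Nat.sub_sub_self (card_le_card hV), sdiff_right_comm,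
          ← northeastEnds, hgt, wt, rib,
          hgtSet_eq_card_cellsWithUpperNeighbor (ordConnected_skewCells mu lam) hbr.disjoint,
          wtSet_eq_card_cellsWithRightNeighbor (ordConnected_skewCells mu lam) hbr.disjoint,
          ribSet_eq_card_northeastEnds hbr.disjoint]

/-- **Strip-decomposition generating function of a pair of broken ribbons.** -/
theorem strip_decomposition_generating_function
    (lam lp mm mu : YoungDiagram) (h1 : lam ≤ lp) (h2 : mm ≤ mu)
    (hbr1 : IsBrokenRibbon lam lp) (hbr2 : IsBrokenRibbon mm mu) :
    (∑ᶠ (l' : YoungDiagram) (m' : YoungDiagram),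
      if lam ≤ l' ∧ l' ≤ lp ∧ mm ≤ m' ∧ m' ≤ mu ∧
          IsHorizontalStrip lam l' ∧ IsHorizontalStrip mm m' ∧
          IsVerticalStrip l' lp ∧ IsVerticalStrip m' mu then
        ((-1 : Polynomial ℤ) ^ (skewSize mm mu) *
          (-(Polynomial.X : Polynomial ℤ)) ^ (skewSize l' lp + skewSize mm m'))
      else 0) =
    (-1 : Polynomial ℤ) ^ (skewSize mm mu) *
      (-(Polynomial.X : Polynomial ℤ)) ^ (hgt lam lp + wt mm mu) *
      (1 - Polynomial.X) ^ (rib lam lp + rib mm mu) := by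
  set q : Polynomial ℤ := -Polynomial.X
  have hsplit : ∀ l' m', (if lam ≤ l' ∧ l' ≤ lp ∧ mm ≤ m' ∧ m' ≤ mu ∧
        IsHorizontalStrip lam l' ∧ IsHorizontalStrip mm m' ∧
        IsVerticalStrip l' lp ∧ IsVerticalStrip m' mu then
      (-1 : Polynomial ℤ) ^ skewSize mm mu * q ^ (skewSize l' lp + skewSize mm m') else 0) =
      (-1) ^ skewSize mm mu *
        (if IsStripDecomposition lam l' lp then 1 ^ skewSize lam l' * q ^ skewSize l' lp else 0) *
        (if IsStripDecomposition mm m' mu then q ^ skewSize mm m' * 1 ^ skewSize m' mu else 0) := by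
    intro l' m'
    rw [mul_assoc, ite_zero_mul_ite_zero, mul_ite, mul_zero]
    exact if_congr (by unfold IsStripDecomposition; tauto) (by ring) rfl
  simp_rw [hsplit, ← mul_finsum, ← finsum_mul]
  rw [← mul_finsum, finsum_isStripDecomposition _ _ h1 hbr1,
    finsum_isStripDecomposition _ _ h2 hbr2]
  ring
end
end

section
/- (Counting k-NE tableaux on a broken ribbon) Let μ ⊆ λ be partitions such that λ/μ is a broken ribbon with r = |λ/μ| ≥ 1 cells, and let 1 ≤ k ≤ r. Then the number of standard Young tableaux of shape λ/μ having the k-NE property equals the binomial coefficient C(rib(λ/μ) − 1, k − 1 − wt(λ/μ)), interpreted as 0 when k − 1 − wt(λ/μ) is negative or exceeds rib(λ/μ) − 1. -/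
open scoped Classical

noncomputable section

/-- A standard Young tableau of skew shape `lam/mu` with `n = skewSize mu lam` cells:
a bijective filling of the skew cells with `1, …, n`, strictly increasing along rows
and down columns (and `0` outside the skew cells). -/
structure SkewSYT (mu lam : YoungDiagram) where
  entry : ℕ × ℕ → ℕ
  zeros : ∀ c, c ∉ skewCells mu lam → entry c = 0
  mem : ∀ c ∈ skewCells mu lam, 1 ≤ entry c ∧ entry c ≤ skewSize mu lam
  bij : ∀ v : ℕ, 1 ≤ v → v ≤ skewSize mu lam → ∃! c, c ∈ skewCells mu lam ∧ entry c = v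
  rowStrict : ∀ i j, (i, j) ∈ skewCells mu lam → (i, j + 1) ∈ skewCells mu lam →
    entry (i, j) < entry (i, j + 1)
  colStrict : ∀ i j, (i, j) ∈ skewCells mu lam → (i + 1, j) ∈ skewCells mu lam →
    entry (i, j) < entry (i + 1, j)

/-- The `k`-NE property of a standard Young tableau `T` of shape `lam/mu`:
(NE1) the rightmost cell of the first nonempty row of the skew diagram has entry `k`;
(NE2) if `i < j < k` then the cell containing `i` is in a strictly smaller column than
the cell containing `j`;
(NE3) if `k < i < j` then the cell containing `i` is in a strictly smaller row than
the cell containing `j`. -/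
def HasKNE {mu lam : YoungDiagram} (T : SkewSYT mu lam) (k : ℕ) : Prop :=
  (∀ i j : ℕ, (i, j) ∈ skewCells mu lam → (∀ c ∈ skewCells mu lam, i ≤ c.1) →
      (∀ j' : ℕ, (i, j') ∈ skewCells mu lam → j' ≤ j) → T.entry (i, j) = k) ∧
  (∀ c ∈ skewCells mu lam, ∀ d ∈ skewCells mu lam,
      T.entry c < T.entry d → T.entry d < k → c.2 < d.2) ∧
  (∀ c ∈ skewCells mu lam, ∀ d ∈ skewCells mu lam,
      k < T.entry c → T.entry c < T.entry d → c.1 < d.1)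

/-!
In a `k`-NE tableau the entries below `k` increase with the column and those above `k` with
the row, so the tableau is determined by the set `L` of cells carrying entries `< k`. A cell
with a cell above it is not in `L` (NE2), and a cell with a right neighbour is in `L` (NE3). In a
broken ribbon the cells with no cell above are exactly the `wt` cells with a right neighbour
together with the north-east ends of the `rib` ribbons, and the entry `k` sits at the end of
the first row, which is one of these ends. Conversely, for every choice of `k - 1 - wt` of the
other `rib - 1` ends, listing `L` by columns, then the end of the first row, then the remaining
cells by rows numbers the cells as a `k`-NE tableau.
-/

namespace Finset

variable {α β : Type*} [LinearOrder β] {X : Finset α} {κ : α → β} {c d : α}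

def rankBy (X : Finset α) (κ : α → β) (c : α) : ℕ := (X.filter fun d => κ d < κ c).card

theorem rankBy_lt_card (hc : c ∈ X) : X.rankBy κ c < X.card :=
  card_lt_card (filter_ssubset.2 ⟨c, hc, lt_irrefl _⟩)

theorem filter_lt_subset_filter_lt (h : κ c ≤ κ d) :
    (X.filter fun e => κ e < κ c) ⊆ X.filter fun e => κ e < κ d :=
  fun _ he => mem_filter.2 ⟨(mem_filter.1 he).1, (mem_filter.1 he).2.trans_le h⟩

theorem rankBy_le_rankBy (h : κ c ≤ κ d) : X.rankBy κ c ≤ X.rankBy κ d :=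
  card_le_card (filter_lt_subset_filter_lt h)

theorem rankBy_lt_rankBy_iff (hc : c ∈ X) : X.rankBy κ c < X.rankBy κ d ↔ κ c < κ d := by
  refine ⟨fun h => lt_of_not_ge fun h' => (rankBy_le_rankBy h').not_gt h, fun h => ?_⟩
  refine card_lt_card (ssubset_iff_of_subset ?_ |>.2 ⟨c, ?_, ?_⟩)
  · exact filter_lt_subset_filter_lt h.le
  · exact mem_filter.2 ⟨hc, h⟩
  · simp

theorem rankBy_injOn (hκ : Set.InjOn κ X) : Set.InjOn (X.rankBy κ) X := by
  intro c hc d hd h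
  refine hκ hc hd (le_antisymm ?_ ?_) <;> refine le_of_not_gt fun h' => ?_
  · exact ((rankBy_lt_rankBy_iff hd).2 h').ne' h
  · exact ((rankBy_lt_rankBy_iff hc).2 h').ne h

theorem image_rankBy (hκ : Set.InjOn κ X) : X.image (X.rankBy κ) = range X.card :=
  eq_of_subset_of_card_le
    (fun _ hv => by
      obtain ⟨c, hc, rfl⟩ := mem_image.1 hv
      exact mem_range.2 (rankBy_lt_card hc))
    (by rw [card_range, card_image_of_injOn (rankBy_injOn hκ)])

theorem rankBy_congr {γ : Type*} [LinearOrder γ] {τ : α → γ} (hτ : Set.InjOn τ X)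
    (h : ∀ c ∈ X, ∀ d ∈ X, τ c < τ d → κ c < κ d) (hc : c ∈ X) :
    X.rankBy κ c = X.rankBy τ c := by
  refine congrArg card (filter_congr fun d hd => ⟨fun hκd => ?_, h d hd c hc⟩)
  rcases lt_trichotomy (τ d) (τ c) with hlt | heq | hgt
  · exact hlt
  · exact absurd hκd (by rw [hτ hd hc heq]; exact lt_irrefl _)
  · exact absurd (h c hc d hd hgt) hκd.asymm

theorem card_subsets_card_add_eq (E : Finset α) (w t : ℕ) :
    Nat.card {X : Finset α // X ⊆ E ∧ X.card + w = t} =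
      if w ≤ t then E.card.choose (t - w) else 0 := by
  split_ifs with hwt
  · rw [← card_powersetCard, ← Nat.card_eq_finsetCard]
    exact Nat.card_congr (Equiv.subtypeEquivRight fun X => by
      rw [mem_powersetCard]
      exact and_congr_right fun _ => by omega)
  · have : IsEmpty {X : Finset α // X ⊆ E ∧ X.card + w = t} := ⟨fun X => by omega⟩
    exact Nat.card_of_isEmpty

end Finset

namespace SkewSYT

variable {mu lam : YoungDiagram}

theorem ext {T U : SkewSYT mu lam} (h : T.entry = U.entry) : T = U := by
  cases T; cases U; cases h; rfl

theorem entry_injOn (T : SkewSYT mu lam) : Set.InjOn T.entry (skewCells mu lam) := by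
  intro c hc d hd h
  obtain ⟨e, -, he⟩ := T.bij (T.entry c) (T.mem c hc).1 (T.mem c hc).2
  rw [he c ⟨hc, rfl⟩, he d ⟨hd, h.symm⟩]

theorem card_filter_entry_lt (T : SkewSYT mu lam) {v : ℕ} (hv : v ≤ skewSize mu lam + 1) :
    ((skewCells mu lam).filter fun d => T.entry d < v).card = v - 1 := by
  have himage : ((skewCells mu lam).filter fun d => T.entry d < v).image T.entry =
      Finset.Ico 1 v := by
    ext u
    simp only [Finset.mem_image, Finset.mem_filter, Finset.mem_Ico]
    constructor
    · rintro ⟨d, ⟨hd, hdv⟩, rfl⟩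
      exact ⟨(T.mem d hd).1, hdv⟩
    · rintro ⟨hu, huv⟩
      obtain ⟨d, ⟨hd, rfl⟩, -⟩ := T.bij u hu (by omega)
      exact ⟨d, ⟨hd, huv⟩, rfl⟩
  rw [← Finset.card_image_of_injOn (T.entry_injOn.mono (Finset.coe_subset.2
    (Finset.filter_subset _ _))), himage, Nat.card_Ico]

theorem rankBy_entry (T : SkewSYT mu lam) {c : ℕ × ℕ} (hc : c ∈ skewCells mu lam) :
    (skewCells mu lam).rankBy T.entry c + 1 = T.entry c := by
  have := T.mem c hc
  rw [Finset.rankBy, T.card_filter_entry_lt (by omega)]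
  omega

def ofKey {β : Type*} [LinearOrder β] (κ : ℕ × ℕ → β)
    (hκ : Set.InjOn κ (skewCells mu lam))
    (hrow : ∀ i j, (i, j) ∈ skewCells mu lam → (i, j + 1) ∈ skewCells mu lam →
      κ (i, j) < κ (i, j + 1))
    (hcol : ∀ i j, (i, j) ∈ skewCells mu lam → (i + 1, j) ∈ skewCells mu lam →
      κ (i, j) < κ (i + 1, j)) :
    SkewSYT mu lam where
  entry c := if c ∈ skewCells mu lam then (skewCells mu lam).rankBy κ c + 1 else 0
  zeros _ hc := if_neg hc
  mem c hc := by
    rw [if_pos hc]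
    exact ⟨Nat.le_add_left 1 _, Finset.rankBy_lt_card hc⟩
  bij v hv hvn := by
    have hv' : v - 1 ∈ (skewCells mu lam).image ((skewCells mu lam).rankBy κ) := by
      rw [Finset.image_rankBy hκ, Finset.mem_range]
      exact lt_of_lt_of_le (by omega) hvn
    obtain ⟨c, hc, hcv⟩ := Finset.mem_image.1 hv'
    refine ⟨c, ⟨hc, by rw [if_pos hc]; omega⟩, fun d ⟨hd, hdv⟩ => ?_⟩
    rw [if_pos hd] at hdv
    exact Finset.rankBy_injOn hκ hd hc (by omega)
  rowStrict i j h h' := by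
    rw [if_pos h, if_pos h']
    exact Nat.succ_lt_succ ((Finset.rankBy_lt_rankBy_iff h).2 (hrow i j h h'))
  colStrict i j h h' := by
    rw [if_pos h, if_pos h']
    exact Nat.succ_lt_succ ((Finset.rankBy_lt_rankBy_iff h).2 (hcol i j h h'))

section OfKey

variable {β : Type*} [LinearOrder β] {κ : ℕ × ℕ → β}
  {hκ : Set.InjOn κ (skewCells mu lam)}
  {hrow : ∀ i j, (i, j) ∈ skewCells mu lam → (i, j + 1) ∈ skewCells mu lam →
    κ (i, j) < κ (i, j + 1)}
  {hcol : ∀ i j, (i, j) ∈ skewCells mu lam → (i + 1, j) ∈ skewCells mu lam →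
    κ (i, j) < κ (i + 1, j)}

theorem ofKey_entry {c : ℕ × ℕ} (hc : c ∈ skewCells mu lam) :
    (ofKey κ hκ hrow hcol).entry c = (skewCells mu lam).rankBy κ c + 1 :=
  if_pos hc

theorem ofKey_entry_lt_iff {c d : ℕ × ℕ} (hc : c ∈ skewCells mu lam)
    (hd : d ∈ skewCells mu lam) :
    (ofKey κ hκ hrow hcol).entry c < (ofKey κ hκ hrow hcol).entry d ↔ κ c < κ d := by
  rw [ofKey_entry hc, ofKey_entry hd, Nat.add_lt_add_iff_right, Finset.rankBy_lt_rankBy_iff hc]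

theorem eq_ofKey (T : SkewSYT mu lam) (hT : ∀ c ∈ skewCells mu lam, ∀ d ∈ skewCells mu lam,
    T.entry c < T.entry d → κ c < κ d) : T = ofKey κ hκ hrow hcol := by
  refine ext (funext fun c => ?_)
  by_cases hc : c ∈ skewCells mu lam
  · rw [ofKey_entry hc, Finset.rankBy_congr T.entry_injOn hT hc, T.rankBy_entry hc]
  · rw [T.zeros c hc, (ofKey κ hκ hrow hcol).zeros c hc]

end OfKey

end SkewSYT

section SkewShape

variable {mu lam : YoungDiagram}

theorem mem_skewCells_s11 {i j : ℕ} :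
    (i, j) ∈ skewCells mu lam ↔ mu.rowLen i ≤ j ∧ j < lam.rowLen i := by
  simp only [skewCells, Finset.mem_sdiff, YoungDiagram.mem_cells,
    YoungDiagram.mem_iff_lt_rowLen, not_lt]
  tauto

theorem skewCells_col_convex {i i' t j : ℕ} (h : (i, j) ∈ skewCells mu lam)
    (h' : (i', j) ∈ skewCells mu lam) (hit : i ≤ t) (hti : t ≤ i') :
    (t, j) ∈ skewCells mu lam := by
  rw [mem_skewCells_s11] at *
  exact ⟨(mu.rowLen_anti i t hit).trans h.1, h'.2.trans_le (lam.rowLen_anti t i' hti)⟩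

theorem skewCells_row_convex {i j j' t : ℕ} (h : (i, j) ∈ skewCells mu lam)
    (h' : (i, j') ∈ skewCells mu lam) (hjt : j ≤ t) (htj : t ≤ j') :
    (i, t) ∈ skewCells mu lam := by
  rw [mem_skewCells_s11] at *
  omega

theorem snd_eq_rowLen_sub_one {c : ℕ × ℕ} (hc : c ∈ skewCells mu lam)
    (hright : (c.1, c.2 + 1) ∉ skewCells mu lam) : c.2 = lam.rowLen c.1 - 1 := by
  rw [mem_skewCells_s11] at hc hright
  omega

variable (mu lam)

def topCells : Finset (ℕ × ℕ) :=
  (skewCells mu lam).filter fun c => ∀ i, i + 1 = c.1 → (i, c.2) ∉ skewCells mu lam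

def rightLinkedCells : Finset (ℕ × ℕ) :=
  (skewCells mu lam).filter fun c => (c.1, c.2 + 1) ∈ skewCells mu lam

/-- The north-east ends of the ribbons of `lam / mu`. -/
def ribbonHeads : Finset (ℕ × ℕ) :=
  (topCells mu lam).filter fun c => (c.1, c.2 + 1) ∉ skewCells mu lam

variable {mu lam}

theorem topCells_subset : topCells mu lam ⊆ skewCells mu lam := Finset.filter_subset _ _

theorem rightLinkedCells_subset : rightLinkedCells mu lam ⊆ skewCells mu lam :=
  Finset.filter_subset _ _

theorem ribbonHeads_subset_topCells : ribbonHeads mu lam ⊆ topCells mu lam :=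
  Finset.filter_subset _ _

theorem disjoint_ribbonHeads_rightLinkedCells :
    Disjoint (ribbonHeads mu lam) (rightLinkedCells mu lam) :=
  Finset.disjoint_left.2 fun _ hc hc' =>
    (Finset.mem_filter.1 hc).2 (Finset.mem_filter.1 hc').2

-- A cell above a right-linked cell would complete a 2×2 block with their right neighbours.
theorem rightLinkedCells_subset_topCells (hbr : IsBrokenRibbon mu lam) :
    rightLinkedCells mu lam ⊆ topCells mu lam := by
  intro c hc
  obtain ⟨hc, hright⟩ := Finset.mem_filter.1 hc
  refine Finset.mem_filter.2 ⟨hc, fun i hi habove => hbr i c.2 ⟨habove, ?_, ?_, ?_⟩⟩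
  · rw [mem_skewCells_s11] at habove hright ⊢
    have := lam.rowLen_anti i c.1 (by omega)
    omega
  · rwa [hi]
  · rwa [hi]

theorem card_topCells (hbr : IsBrokenRibbon mu lam) :
    (topCells mu lam).card = (ribbonHeads mu lam).card + (rightLinkedCells mu lam).card := by
  have hlinked : (topCells mu lam).filter (fun c => (c.1, c.2 + 1) ∈ skewCells mu lam) =
      rightLinkedCells mu lam := by
    rw [topCells, rightLinkedCells, Finset.filter_filter]
    refine Finset.filter_congr fun c hc => ⟨And.right, fun h => ⟨?_, h⟩⟩
    exact (Finset.mem_filter.1 (rightLinkedCells_subset_topCells hbr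
      (Finset.mem_filter.2 ⟨hc, h⟩))).2
  rw [ribbonHeads, ← hlinked, add_comm, Finset.card_filter_add_card_filter_not]

theorem topCells_injOn_snd : Set.InjOn Prod.snd (topCells mu lam : Set (ℕ × ℕ)) := by
  suffices ∀ c ∈ topCells mu lam, ∀ d ∈ topCells mu lam, c.2 = d.2 → c.1 ≤ d.1 from
    fun c hc d hd h => Prod.ext (le_antisymm (this c hc d hd h) (this d hd c hc h.symm)) h
  rintro ⟨a, j⟩ hc ⟨b, j'⟩ hd (rfl : j = j')
  obtain ⟨hc, hctop⟩ := Finset.mem_filter.1 hc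
  by_contra! hlt
  exact hctop (a - 1) (by dsimp only at hlt ⊢; omega)
    (skewCells_col_convex (Finset.mem_filter.1 hd).1 hc (by dsimp only at hlt ⊢; omega)
      (by omega))

theorem injOn_fst_sdiff_rightLinkedCells :
    Set.InjOn Prod.fst (↑(skewCells mu lam \ rightLinkedCells mu lam) : Set (ℕ × ℕ)) := by
  have hcol {c : ℕ × ℕ} (hc : c ∈ skewCells mu lam \ rightLinkedCells mu lam) :
      c.2 = lam.rowLen c.1 - 1 := by
    obtain ⟨hc, hlinked⟩ := Finset.mem_sdiff.1 hc
    exact snd_eq_rowLen_sub_one hc fun h => hlinked (Finset.mem_filter.2 ⟨hc, h⟩)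
  intro c hc d hd h
  exact Prod.ext h (by rw [hcol hc, hcol hd, h])

end SkewShape

section ComponentLabel

variable {S : Finset (ℕ × ℕ)} {α : Type*}

def LabelsComponents (S : Finset (ℕ × ℕ)) (f : ℕ × ℕ → α) : Prop :=
  ∀ x y : {c // c ∈ S}, Quotient.mk (componentSetoid S) x = Quotient.mk _ y ↔ f x.1 = f y.1

def componentLabel (f : ℕ × ℕ → α) (hf : LabelsComponents S f) :
    SkewComponents S → α :=
  Quotient.lift (fun x => f x.1) fun x y h => (hf x y).1 (Quotient.sound h)

theorem componentLabel_injective (f : ℕ × ℕ → α) (hf : LabelsComponents S f) :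
    Function.Injective (componentLabel f hf) := by
  intro p q
  induction p using Quotient.ind
  induction q using Quotient.ind
  exact (hf _ _).2

theorem ribSet_eq_card_image [DecidableEq α] (f : ℕ × ℕ → α) (hf : LabelsComponents S f) :
    ribSet S = (S.image f).card := by
  rw [ribSet, ← Nat.card_range_of_injective (componentLabel_injective f hf),
    ← Nat.card_eq_finsetCard]
  refine Nat.card_congr (Equiv.setCongr (Set.ext fun a => ?_))
  simp only [Set.mem_range, Finset.coe_image, Set.mem_image, Finset.mem_coe]
  refine ⟨fun ⟨p, hp⟩ => ?_, fun ⟨c, hc, hca⟩ => ⟨Quotient.mk _ ⟨c, hc⟩, hca⟩⟩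
  induction p using Quotient.ind
  exact ⟨_, Subtype.prop _, hp⟩

theorem card_componentColPairs_eq_card_image [DecidableEq α] (f : ℕ × ℕ → α)
    (hf : LabelsComponents S f) :
    Nat.card (componentColPairs S) = (S.image fun c => (f c, c.2)).card := by
  have hinj : Function.Injective
      fun p : componentColPairs S => (componentLabel f hf p.1.1, p.1.2) := by
    rintro ⟨⟨p, j⟩, _⟩ ⟨⟨q, j'⟩, _⟩ h
    simp only [Prod.mk.injEq] at h
    obtain ⟨hpq, rfl⟩ := h
    exact Subtype.ext (Prod.ext (componentLabel_injective f hf hpq) rfl)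
  rw [← Nat.card_range_of_injective hinj, ← Nat.card_eq_finsetCard]
  refine Nat.card_congr (Equiv.setCongr (Set.ext fun a => ?_))
  simp only [Set.mem_range, Finset.coe_image, Set.mem_image, Finset.mem_coe]
  constructor
  · rintro ⟨⟨⟨p, j⟩, c, hcp, hcj⟩, rfl⟩
    dsimp only at hcp hcj
    subst hcp hcj
    exact ⟨c.1, c.2, rfl⟩
  · rintro ⟨c, hc, rfl⟩
    exact ⟨⟨(Quotient.mk _ ⟨c, hc⟩, c.2), ⟨c, hc⟩, rfl, rfl⟩, rfl⟩

end ComponentLabel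

section Components

variable {mu lam : YoungDiagram}

def RowsMeet (mu lam : YoungDiagram) (i : ℕ) : Prop := mu.rowLen i < lam.rowLen (i + 1)

-- For a nonempty row `i`, the top row of the ribbon containing it.
def compTop (mu lam : YoungDiagram) : ℕ → ℕ
  | 0 => 0
  | i + 1 => if RowsMeet mu lam i then compTop mu lam i else i + 1

theorem compTop_le (i : ℕ) : compTop mu lam i ≤ i := by
  induction i with
  | zero => rfl
  | succ i ih =>
    rw [compTop]
    split_ifs <;> omega

theorem compTop_succ_of_rowsMeet {i : ℕ} (h : RowsMeet mu lam i) :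
    compTop mu lam (i + 1) = compTop mu lam i := if_pos h

theorem compTop_succ_of_not_rowsMeet {i : ℕ} (h : ¬ RowsMeet mu lam i) :
    compTop mu lam (i + 1) = i + 1 := if_neg h

theorem compTop_compTop (i : ℕ) : compTop mu lam (compTop mu lam i) = compTop mu lam i := by
  induction i with
  | zero => rfl
  | succ i ih =>
    by_cases h : RowsMeet mu lam i
    · rwa [compTop_succ_of_rowsMeet h]
    · rw [compTop_succ_of_not_rowsMeet h, compTop_succ_of_not_rowsMeet h]

theorem not_rowsMeet_of_compTop_eq {i : ℕ} (h : compTop mu lam (i + 1) = i + 1) :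
    ¬ RowsMeet mu lam i := fun hm => by
  have := compTop_le (mu := mu) (lam := lam) i
  rw [compTop_succ_of_rowsMeet hm] at h
  omega

theorem rowsMeet_of_mem_of_mem {i j : ℕ} (h : (i, j) ∈ skewCells mu lam)
    (h' : (i + 1, j) ∈ skewCells mu lam) : RowsMeet mu lam i := by
  rw [mem_skewCells_s11] at h h'
  exact h.1.trans_lt h'.2

theorem RowsMeet.mem_skewCells {i : ℕ} (h : RowsMeet mu lam i) :
    (i, mu.rowLen i) ∈ skewCells mu lam ∧ (i + 1, mu.rowLen i) ∈ skewCells mu lam := by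
  rw [_root_.mem_skewCells_s11, _root_.mem_skewCells_s11]
  have := lam.rowLen_anti i (i + 1) (by omega)
  exact ⟨⟨le_rfl, by unfold RowsMeet at h; omega⟩, mu.rowLen_anti i (i + 1) (by omega), h⟩

def cellClass {c : ℕ × ℕ} (hc : c ∈ skewCells mu lam) : SkewComponents (skewCells mu lam) :=
  Quotient.mk _ ⟨c, hc⟩

theorem cellClass_eq_of_cellAdj {c d : ℕ × ℕ} (hc : c ∈ skewCells mu lam)
    (hd : d ∈ skewCells mu lam) (h : CellAdj c d) : cellClass hc = cellClass hd :=
  Quotient.sound (Relation.EqvGen.rel _ _ h)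

theorem cellClass_eq_of_le_of_fst_eq {i j j' : ℕ} (h : (i, j) ∈ skewCells mu lam)
    (hjj' : j ≤ j') (h' : (i, j') ∈ skewCells mu lam) : cellClass h = cellClass h' := by
  induction j', hjj' using Nat.le_induction with
  | base => rfl
  | succ t hjt ih =>
    have ht : (i, t) ∈ skewCells mu lam := skewCells_row_convex h h' hjt (by omega)
    exact (ih ht).trans (cellClass_eq_of_cellAdj ht h' (Or.inl ⟨rfl, Or.inr rfl⟩))

theorem cellClass_eq_of_fst_eq {i j j' : ℕ} (h : (i, j) ∈ skewCells mu lam)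
    (h' : (i, j') ∈ skewCells mu lam) : cellClass h = cellClass h' := by
  rcases le_total j j' with hjj' | hj'j
  · exact cellClass_eq_of_le_of_fst_eq h hjj' h'
  · exact (cellClass_eq_of_le_of_fst_eq h' hj'j h).symm

theorem exists_cellClass_eq_compTop (i : ℕ) : ∀ {j : ℕ} (h : (i, j) ∈ skewCells mu lam),
    ∃ h' : (compTop mu lam i, mu.rowLen (compTop mu lam i)) ∈ skewCells mu lam,
      cellClass h = cellClass h' := by
  induction i with
  | zero =>
    intro j h
    have hleft : (0, mu.rowLen 0) ∈ skewCells mu lam := by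
      rw [mem_skewCells_s11] at h ⊢
      omega
    exact ⟨hleft, cellClass_eq_of_fst_eq h hleft⟩
  | succ i ih =>
    intro j h
    by_cases hm : RowsMeet mu lam i
    · obtain ⟨hup, hdown⟩ := hm.mem_skewCells
      obtain ⟨h', hclass⟩ := ih hup
      rw [compTop_succ_of_rowsMeet hm]
      refine ⟨h', (cellClass_eq_of_fst_eq h hdown).trans ?_⟩
      exact (cellClass_eq_of_cellAdj hup hdown (Or.inr ⟨rfl, Or.inr rfl⟩)).symm.trans hclass
    · rw [compTop_succ_of_not_rowsMeet hm]
      have hleft : (i + 1, mu.rowLen (i + 1)) ∈ skewCells mu lam := by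
        rw [mem_skewCells_s11] at h ⊢
        omega
      exact ⟨hleft, cellClass_eq_of_fst_eq h hleft⟩

theorem compTop_eq_of_cellAdj {c d : ℕ × ℕ} (hc : c ∈ skewCells mu lam)
    (hd : d ∈ skewCells mu lam) (h : CellAdj c d) : compTop mu lam c.1 = compTop mu lam d.1 := by
  obtain ⟨a, j⟩ := c
  obtain ⟨b, j'⟩ := d
  simp only [CellAdj] at h
  rcases h with ⟨rfl, -⟩ | ⟨rfl, rfl | rfl⟩
  · rfl
  · exact compTop_succ_of_rowsMeet (rowsMeet_of_mem_of_mem hd hc)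
  · exact (compTop_succ_of_rowsMeet (rowsMeet_of_mem_of_mem hc hd)).symm

theorem compTop_eq_of_cellClass_eq {c d : ℕ × ℕ} {hc : c ∈ skewCells mu lam}
    {hd : d ∈ skewCells mu lam} (h : cellClass hc = cellClass hd) :
    compTop mu lam c.1 = compTop mu lam d.1 := by
  suffices ∀ x y : {c // c ∈ skewCells mu lam},
      Relation.EqvGen (fun x y : {c // c ∈ skewCells mu lam} => CellAdj x.1 y.1) x y →
        compTop mu lam x.1.1 = compTop mu lam y.1.1 from this _ _ (Quotient.exact h)
  intro x y hrel
  induction hrel with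
  | rel x y hxy => exact compTop_eq_of_cellAdj x.2 y.2 hxy
  | refl => rfl
  | symm _ _ _ ih => exact ih.symm
  | trans _ _ _ _ _ ih ih' => exact ih.trans ih'

theorem cellClass_eq_iff {c d : ℕ × ℕ} (hc : c ∈ skewCells mu lam)
    (hd : d ∈ skewCells mu lam) :
    cellClass hc = cellClass hd ↔ compTop mu lam c.1 = compTop mu lam d.1 := by
  refine ⟨compTop_eq_of_cellClass_eq, fun h => ?_⟩
  obtain ⟨hc', hcc'⟩ := exists_cellClass_eq_compTop c.1 hc
  obtain ⟨hd', hdd'⟩ := exists_cellClass_eq_compTop d.1 hd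
  rw [hcc', hdd']
  simp only [h]

theorem labelsComponents_compTop :
    LabelsComponents (skewCells mu lam) fun c => compTop mu lam c.1 :=
  fun x y => cellClass_eq_iff x.2 y.2

theorem mem_ribbonHeads_iff {c : ℕ × ℕ} : c ∈ ribbonHeads mu lam ↔
    c ∈ skewCells mu lam ∧ compTop mu lam c.1 = c.1 ∧ c.2 = lam.rowLen c.1 - 1 := by
  obtain ⟨a, j⟩ := c
  simp only [ribbonHeads, topCells, Finset.mem_filter]
  constructor
  · rintro ⟨⟨hc, habove⟩, hright⟩
    refine ⟨hc, ?_, snd_eq_rowLen_sub_one hc hright⟩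
    obtain _ | i := a
    · rfl
    refine compTop_succ_of_not_rowsMeet fun hm => habove i rfl ?_
    rw [mem_skewCells_s11] at hc hright ⊢
    have := lam.rowLen_anti i (i + 1) (by omega)
    unfold RowsMeet at hm
    omega
  · rintro ⟨hc, htop, hj⟩
    refine ⟨⟨hc, fun i hi habove => not_rowsMeet_of_compTop_eq (hi ▸ htop) ?_⟩, ?_⟩
    · rw [mem_skewCells_s11] at hc habove
      subst hi
      exact habove.1.trans_lt hc.2
    · rw [mem_skewCells_s11] at hc ⊢
      omega

theorem card_image_compTop :
    ((skewCells mu lam).image fun c => compTop mu lam c.1).card = (ribbonHeads mu lam).card := by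
  have himage : (skewCells mu lam).image (fun c => compTop mu lam c.1) =
      (ribbonHeads mu lam).image Prod.fst := by
    ext a
    simp only [Finset.mem_image]
    constructor
    · rintro ⟨⟨i, j⟩, hc, rfl⟩
      obtain ⟨hleft, -⟩ := exists_cellClass_eq_compTop i hc
      refine ⟨(compTop mu lam i, lam.rowLen (compTop mu lam i) - 1), ?_, rfl⟩
      refine mem_ribbonHeads_iff.2 ⟨?_, compTop_compTop i, rfl⟩
      rw [mem_skewCells_s11] at hleft ⊢
      omega
    · rintro ⟨c, hc, rfl⟩
      exact ⟨c, (mem_ribbonHeads_iff.1 hc).1, (mem_ribbonHeads_iff.1 hc).2.1⟩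
  rw [himage, Finset.card_image_of_injOn]
  intro c hc d hd h
  rw [Finset.mem_coe, mem_ribbonHeads_iff] at hc hd
  exact Prod.ext h (by rw [hc.2.2, hd.2.2, h])

theorem exists_mem_topCells_compTop_eq (i : ℕ) : ∀ {j : ℕ}, (i, j) ∈ skewCells mu lam →
    ∃ t, (t, j) ∈ topCells mu lam ∧ compTop mu lam t = compTop mu lam i := by
  induction i with
  | zero =>
    exact fun h => ⟨0, Finset.mem_filter.2 ⟨h, fun _ hi => absurd hi (by omega)⟩, rfl⟩
  | succ i ih =>
    intro j h
    by_cases habove : (i, j) ∈ skewCells mu lam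
    · obtain ⟨t, ht, htop⟩ := ih habove
      exact ⟨t, ht, htop.trans (compTop_succ_of_rowsMeet
        (rowsMeet_of_mem_of_mem habove h)).symm⟩
    · refine ⟨i + 1, Finset.mem_filter.2 ⟨h, fun i' hi' => ?_⟩, rfl⟩
      rwa [show i' = i by simpa using hi']

theorem card_image_compTop_snd :
    ((skewCells mu lam).image fun c => (compTop mu lam c.1, c.2)).card =
      (topCells mu lam).card := by
  have himage : (skewCells mu lam).image (fun c => (compTop mu lam c.1, c.2)) =
      (topCells mu lam).image (fun c => (compTop mu lam c.1, c.2)) := by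
    refine le_antisymm (fun p hp => ?_) (Finset.image_subset_image topCells_subset)
    obtain ⟨⟨i, j⟩, hc, rfl⟩ := Finset.mem_image.1 hp
    obtain ⟨t, ht, htop⟩ := exists_mem_topCells_compTop_eq i hc
    exact Finset.mem_image.2 ⟨(t, j), ht, by rw [htop]⟩
  rw [himage, Finset.card_image_of_injOn]
  exact fun c hc d hd h => topCells_injOn_snd hc hd (Prod.mk.inj h).2

theorem rib_eq_card_ribbonHeads : rib mu lam = (ribbonHeads mu lam).card := by
  rw [rib, ribSet_eq_card_image _ labelsComponents_compTop, card_image_compTop]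

theorem wt_eq_card_rightLinkedCells (hbr : IsBrokenRibbon mu lam) :
    wt mu lam = (rightLinkedCells mu lam).card := by
  rw [wt, wtSet, card_componentColPairs_eq_card_image _ labelsComponents_compTop,
    card_image_compTop_snd, card_topCells hbr, ← rib, rib_eq_card_ribbonHeads,
    Nat.add_sub_cancel_left]

end Components

section FirstHead

variable {mu lam : YoungDiagram}

def firstRow (mu lam : YoungDiagram) : ℕ := sInf {i | ∃ j, (i, j) ∈ skewCells mu lam}

def firstHead (mu lam : YoungDiagram) : ℕ × ℕ :=
  (firstRow mu lam, lam.rowLen (firstRow mu lam) - 1)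

theorem firstRow_le {c : ℕ × ℕ} (hc : c ∈ skewCells mu lam) : firstRow mu lam ≤ c.1 :=
  Nat.sInf_le ⟨c.2, hc⟩

theorem firstHead_mem (hne : (skewCells mu lam).Nonempty) :
    firstHead mu lam ∈ skewCells mu lam := by
  obtain ⟨c, hc⟩ := hne
  obtain ⟨j, hj⟩ : ∃ j, (firstRow mu lam, j) ∈ skewCells mu lam :=
    Nat.sInf_mem (s := {i | ∃ j, (i, j) ∈ skewCells mu lam}) ⟨c.1, c.2, hc⟩
  rw [firstHead, mem_skewCells_s11] at *
  omega

theorem firstHead_mem_ribbonHeads (hne : (skewCells mu lam).Nonempty) :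
    firstHead mu lam ∈ ribbonHeads mu lam := by
  have hfh := firstHead_mem hne
  refine Finset.mem_filter.2
    ⟨Finset.mem_filter.2 ⟨hfh, fun i hi habove => ?_⟩, fun hright => ?_⟩
  · have := firstRow_le habove
    simp only [firstHead] at hi this
    omega
  · simp only [firstHead] at hright
    rw [mem_skewCells_s11] at hright
    omega

theorem forall_rightmost_firstRow_iff (hne : (skewCells mu lam).Nonempty)
    {P : ℕ × ℕ → Prop} :
    (∀ i j, (i, j) ∈ skewCells mu lam → (∀ c ∈ skewCells mu lam, i ≤ c.1) →
      (∀ j', (i, j') ∈ skewCells mu lam → j' ≤ j) → P (i, j)) ↔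
      P (firstHead mu lam) := by
  have hfh := firstHead_mem hne
  constructor
  · refine fun h => h _ _ hfh (fun c hc => firstRow_le hc) fun j' hj' => ?_
    rw [mem_skewCells_s11] at hj'
    exact Nat.le_sub_one_of_lt hj'.2
  · intro h i j hij hfirst hlast
    obtain rfl : i = firstRow mu lam := le_antisymm (hfirst _ hfh) (firstRow_le hij)
    have := hlast _ hfh
    rw [mem_skewCells_s11] at hij
    rwa [show j = lam.rowLen (firstRow mu lam) - 1 by omega]

end FirstHead

section Construction

variable {mu lam : YoungDiagram} {k : ℕ} {Sel : Finset (ℕ × ℕ)} {c d : ℕ × ℕ}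

def otherHeads (mu lam : YoungDiagram) : Finset (ℕ × ℕ) :=
  (ribbonHeads mu lam).erase (firstHead mu lam)

theorem otherHeads_subset : otherHeads mu lam ⊆ ribbonHeads mu lam := Finset.erase_subset _ _

def IsHeadSelection (mu lam : YoungDiagram) (k : ℕ) (Sel : Finset (ℕ × ℕ)) : Prop :=
  Sel ⊆ otherHeads mu lam ∧ Sel.card + (rightLinkedCells mu lam).card = k - 1

def lowCells (mu lam : YoungDiagram) (Sel : Finset (ℕ × ℕ)) : Finset (ℕ × ℕ) :=
  rightLinkedCells mu lam ∪ Sel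

-- The tableau attached to `Sel` numbers the cells of `lowCells Sel` column by column, then
-- `firstHead`, then the remaining cells row by row.
def kneKey (mu lam : YoungDiagram) (Sel : Finset (ℕ × ℕ)) (c : ℕ × ℕ) : ℕ ×ₗ ℕ :=
  if c ∈ lowCells mu lam Sel then toLex (0, c.2)
  else if c = firstHead mu lam then toLex (1, 0) else toLex (2, c.1)

theorem lowCells_subset_topCells (hbr : IsBrokenRibbon mu lam) (hSel : Sel ⊆ otherHeads mu lam) :
    lowCells mu lam Sel ⊆ topCells mu lam :=
  Finset.union_subset (rightLinkedCells_subset_topCells hbr)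
    ((hSel.trans otherHeads_subset).trans ribbonHeads_subset_topCells)

theorem lowCells_subset_skewCells (hSel : Sel ⊆ otherHeads mu lam) :
    lowCells mu lam Sel ⊆ skewCells mu lam :=
  Finset.union_subset rightLinkedCells_subset
    (hSel.trans (otherHeads_subset.trans (ribbonHeads_subset_topCells.trans topCells_subset)))

theorem card_lowCells (hSel : Sel ⊆ otherHeads mu lam) :
    (lowCells mu lam Sel).card = Sel.card + (rightLinkedCells mu lam).card := by
  rw [lowCells, Finset.card_union_of_disjoint, add_comm]
  exact (disjoint_ribbonHeads_rightLinkedCells.mono_left (hSel.trans otherHeads_subset)).symm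

theorem firstHead_not_mem_lowCells (hne : (skewCells mu lam).Nonempty)
    (hSel : Sel ⊆ otherHeads mu lam) :
    firstHead mu lam ∉ lowCells mu lam Sel := by
  rw [lowCells, Finset.mem_union, not_or]
  exact ⟨Finset.disjoint_left.1 disjoint_ribbonHeads_rightLinkedCells
    (firstHead_mem_ribbonHeads hne), fun h => Finset.notMem_erase _ _ (hSel h)⟩

theorem kneKey_lt_iff_of_mem (hc : c ∈ lowCells mu lam Sel) (hd : d ∈ lowCells mu lam Sel) :
    kneKey mu lam Sel c < kneKey mu lam Sel d ↔ c.2 < d.2 := by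
  simp [kneKey, hc, hd, Prod.Lex.toLex_lt_toLex]

theorem kneKey_lt_iff_of_not_mem (hc : c ∉ lowCells mu lam Sel) (hc' : c ≠ firstHead mu lam)
    (hd : d ∉ lowCells mu lam Sel) (hd' : d ≠ firstHead mu lam) :
    kneKey mu lam Sel c < kneKey mu lam Sel d ↔ c.1 < d.1 := by
  simp [kneKey, hc, hc', hd, hd', Prod.Lex.toLex_lt_toLex]

theorem kneKey_lt_of_mem_of_not_mem (hc : c ∈ lowCells mu lam Sel)
    (hd : d ∉ lowCells mu lam Sel) : kneKey mu lam Sel c < kneKey mu lam Sel d := by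
  unfold kneKey
  split_ifs <;> simp [Prod.Lex.toLex_lt_toLex]

theorem kneKey_firstHead_lt (hfh : firstHead mu lam ∉ lowCells mu lam Sel)
    (hd : d ∉ lowCells mu lam Sel) (hd' : d ≠ firstHead mu lam) :
    kneKey mu lam Sel (firstHead mu lam) < kneKey mu lam Sel d := by
  simp [kneKey, hfh, hd, hd', Prod.Lex.toLex_lt_toLex]

theorem kneKey_injOn (hbr : IsBrokenRibbon mu lam) (hSel : Sel ⊆ otherHeads mu lam) :
    Set.InjOn (kneKey mu lam Sel) (skewCells mu lam) := by
  intro c hc d hd h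
  by_cases hcl : c ∈ lowCells mu lam Sel <;> by_cases hdl : d ∈ lowCells mu lam Sel
  · refine topCells_injOn_snd (lowCells_subset_topCells hbr hSel hcl)
      (lowCells_subset_topCells hbr hSel hdl) ?_
    simpa [kneKey, hcl, hdl] using h
  · exact absurd h (kneKey_lt_of_mem_of_not_mem hcl hdl).ne
  · exact absurd h (kneKey_lt_of_mem_of_not_mem hdl hcl).ne'
  · have hlinked {e : ℕ × ℕ} (he : e ∉ lowCells mu lam Sel) :
        e ∉ rightLinkedCells mu lam := fun h => he (Finset.mem_union_left _ h)
    simp only [kneKey, hcl, hdl, if_false] at h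
    split_ifs at h with hc' hd' hd'
    · rw [hc', hd']
    · simp at h
    · simp at h
    · exact injOn_fst_sdiff_rightLinkedCells (Finset.mem_sdiff.2 ⟨hc, hlinked hcl⟩)
        (Finset.mem_sdiff.2 ⟨hd, hlinked hdl⟩) (by simpa using h)

theorem kneKey_lt_right {i j : ℕ} (h : (i, j) ∈ skewCells mu lam)
    (h' : (i, j + 1) ∈ skewCells mu lam) :
    kneKey mu lam Sel (i, j) < kneKey mu lam Sel (i, j + 1) := by
  have hlow : (i, j) ∈ lowCells mu lam Sel :=
    Finset.mem_union_left _ (Finset.mem_filter.2 ⟨h, h'⟩)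
  by_cases hlow' : (i, j + 1) ∈ lowCells mu lam Sel
  · exact (kneKey_lt_iff_of_mem hlow hlow').2 (Nat.lt_succ_self j)
  · exact kneKey_lt_of_mem_of_not_mem hlow hlow'

theorem kneKey_lt_below (hbr : IsBrokenRibbon mu lam) (hSel : Sel ⊆ otherHeads mu lam)
    {i j : ℕ} (h : (i, j) ∈ skewCells mu lam) :
    kneKey mu lam Sel (i, j) < kneKey mu lam Sel (i + 1, j) := by
  have hlow' : (i + 1, j) ∉ lowCells mu lam Sel := fun hl =>
    (Finset.mem_filter.1 (lowCells_subset_topCells hbr hSel hl)).2 i rfl h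
  have hfh' : (i + 1, j) ≠ firstHead mu lam := fun he => by
    have := firstRow_le h
    rw [firstHead, Prod.mk.injEq] at he
    omega
  by_cases hlow : (i, j) ∈ lowCells mu lam Sel
  · exact kneKey_lt_of_mem_of_not_mem hlow hlow'
  by_cases hfh : (i, j) = firstHead mu lam
  · exact hfh ▸ kneKey_firstHead_lt (hfh ▸ hlow) hlow' hfh'
  · exact (kneKey_lt_iff_of_not_mem hlow hfh hlow' hfh').2 (Nat.lt_succ_self i)

def kneTableau (hbr : IsBrokenRibbon mu lam) (hSel : Sel ⊆ otherHeads mu lam) :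
    SkewSYT mu lam :=
  SkewSYT.ofKey (kneKey mu lam Sel) (kneKey_injOn hbr hSel) (fun _ _ => kneKey_lt_right)
    (fun _ _ h _ => kneKey_lt_below hbr hSel h)

theorem card_lowCells_le_rankBy_kneKey (hSel : Sel ⊆ otherHeads mu lam)
    (hc : c ∉ lowCells mu lam Sel) :
    (lowCells mu lam Sel).card ≤ (skewCells mu lam).rankBy (kneKey mu lam Sel) c := by
  exact Finset.card_le_card fun d hd =>
    Finset.mem_filter.2 ⟨lowCells_subset_skewCells hSel hd, kneKey_lt_of_mem_of_not_mem hd hc⟩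

theorem rankBy_kneKey_lt_card_iff (hSel : Sel ⊆ otherHeads mu lam) :
    (skewCells mu lam).rankBy (kneKey mu lam Sel) c < (lowCells mu lam Sel).card ↔
      c ∈ lowCells mu lam Sel := by
  refine ⟨fun h => by_contra fun hc' => (card_lowCells_le_rankBy_kneKey hSel hc').not_gt h,
    fun hcl => Finset.card_lt_card (Finset.ssubset_iff_of_subset ?_ |>.2 ⟨c, hcl, by simp⟩)⟩
  intro d hd
  obtain ⟨-, hdc⟩ := Finset.mem_filter.1 hd
  by_contra hdl
  exact (kneKey_lt_of_mem_of_not_mem hcl hdl).asymm hdc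

theorem rankBy_kneKey_firstHead (hne : (skewCells mu lam).Nonempty)
    (hSel : Sel ⊆ otherHeads mu lam) :
    (skewCells mu lam).rankBy (kneKey mu lam Sel) (firstHead mu lam) =
      (lowCells mu lam Sel).card := by
  have hfh := firstHead_not_mem_lowCells hne hSel
  refine le_antisymm (Finset.card_le_card fun d hd => ?_)
    (card_lowCells_le_rankBy_kneKey hSel hfh)
  obtain ⟨hd, hdfh⟩ := Finset.mem_filter.1 hd
  by_contra hdl
  by_cases hd' : d = firstHead mu lam
  · exact hdfh.ne (congrArg _ hd')
  · exact (kneKey_firstHead_lt hfh hdl hd').asymm hdfh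

theorem kneTableau_entry_lt_iff (hbr : IsBrokenRibbon mu lam)
    (hSel : IsHeadSelection mu lam k Sel) (hk : 1 ≤ k) (hc : c ∈ skewCells mu lam) :
    (kneTableau hbr hSel.1).entry c < k ↔ c ∈ lowCells mu lam Sel := by
  rw [kneTableau, SkewSYT.ofKey_entry hc, ← rankBy_kneKey_lt_card_iff hSel.1,
    card_lowCells hSel.1, hSel.2]
  omega

theorem kneTableau_entry_firstHead (hbr : IsBrokenRibbon mu lam)
    (hne : (skewCells mu lam).Nonempty) (hSel : IsHeadSelection mu lam k Sel) (hk : 1 ≤ k) :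
    (kneTableau hbr hSel.1).entry (firstHead mu lam) = k := by
  rw [kneTableau, SkewSYT.ofKey_entry (firstHead_mem hne), rankBy_kneKey_firstHead hne hSel.1,
    card_lowCells hSel.1, hSel.2]
  omega

theorem kneTableau_hasKNE (hbr : IsBrokenRibbon mu lam) (hne : (skewCells mu lam).Nonempty)
    (hSel : IsHeadSelection mu lam k Sel) (hk : 1 ≤ k) : HasKNE (kneTableau hbr hSel.1) k := by
  set T := kneTableau hbr hSel.1
  refine ⟨(forall_rightmost_firstRow_iff hne (P := fun c => T.entry c = k)).2
    (kneTableau_entry_firstHead hbr hne hSel hk),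
    fun c hc d hd hcd hdk => ?_, fun c hc d hd hkc hcd => ?_⟩
  · have hdl := (kneTableau_entry_lt_iff hbr hSel hk hd).1 hdk
    have hcl := (kneTableau_entry_lt_iff hbr hSel hk hc).1 (hcd.trans hdk)
    exact (kneKey_lt_iff_of_mem hcl hdl).1 ((SkewSYT.ofKey_entry_lt_iff hc hd).1 hcd)
  · have hhigh {e : ℕ × ℕ} (he : e ∈ skewCells mu lam) (hke : k < T.entry e) :
        e ∉ lowCells mu lam Sel ∧ e ≠ firstHead mu lam :=
      ⟨fun hl => ((kneTableau_entry_lt_iff hbr hSel hk he).2 hl).asymm hke,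
        fun hfh => (hfh ▸ kneTableau_entry_firstHead hbr hne hSel hk ▸ hke).ne rfl⟩
    obtain ⟨hcl, hcfh⟩ := hhigh hc hkc
    obtain ⟨hdl, hdfh⟩ := hhigh hd (hkc.trans hcd)
    exact (kneKey_lt_iff_of_not_mem hcl hcfh hdl hdfh).1
      ((SkewSYT.ofKey_entry_lt_iff hc hd).1 hcd)

end Construction

section HeadSelection

variable {mu lam : YoungDiagram} {k : ℕ} {T : SkewSYT mu lam}

def headSelection (k : ℕ) (T : SkewSYT mu lam) : Finset (ℕ × ℕ) :=
  (otherHeads mu lam).filter fun c => T.entry c < k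

namespace HasKNE

theorem entry_firstHead (hT : HasKNE T k) (hne : (skewCells mu lam).Nonempty) :
    T.entry (firstHead mu lam) = k :=
  (forall_rightmost_firstRow_iff hne (P := fun c => T.entry c = k)).1 hT.1

theorem filter_entry_lt_subset_topCells (hT : HasKNE T k) :
    (skewCells mu lam).filter (fun c => T.entry c < k) ⊆ topCells mu lam := by
  rintro ⟨a, j⟩ hc
  obtain ⟨hc, hck⟩ := Finset.mem_filter.1 hc
  refine Finset.mem_filter.2 ⟨hc, fun i (hi : i + 1 = a) habove => ?_⟩
  subst hi
  exact lt_irrefl _ (hT.2.1 (i, j) habove (i + 1, j) hc (T.colStrict i j habove hc) hck)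

theorem rightLinkedCells_subset_filter_entry_lt (hT : HasKNE T k)
    (hne : (skewCells mu lam).Nonempty) :
    rightLinkedCells mu lam ⊆ (skewCells mu lam).filter (fun c => T.entry c < k) := by
  intro c hlinked
  obtain ⟨hc, hright⟩ := Finset.mem_filter.1 hlinked
  refine Finset.mem_filter.2 ⟨hc, lt_of_not_ge fun hkc => ?_⟩
  rcases hkc.eq_or_lt with hck | hkc
  · have hfh : c = firstHead mu lam :=
      T.entry_injOn hc (firstHead_mem hne) (by rw [← hck, hT.entry_firstHead hne])
    exact Finset.disjoint_left.1 disjoint_ribbonHeads_rightLinkedCells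
      (firstHead_mem_ribbonHeads hne) (hfh ▸ hlinked)
  · exact lt_irrefl _ (hT.2.2 c hc (c.1, c.2 + 1) hright hkc (T.rowStrict c.1 c.2 hc hright))

theorem lowCells_headSelection (hT : HasKNE T k) (hne : (skewCells mu lam).Nonempty) :
    lowCells mu lam (headSelection k T) = (skewCells mu lam).filter (fun c => T.entry c < k) := by
  refine le_antisymm (Finset.union_subset (hT.rightLinkedCells_subset_filter_entry_lt hne)
    fun c hc => ?_) fun c hc => ?_
  · obtain ⟨hc, hck⟩ := Finset.mem_filter.1 hc
    exact Finset.mem_filter.2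
      ⟨topCells_subset (ribbonHeads_subset_topCells (Finset.mem_of_mem_erase hc)), hck⟩
  · by_cases hlinked : c ∈ rightLinkedCells mu lam
    · exact Finset.mem_union_left _ hlinked
    have htop := hT.filter_entry_lt_subset_topCells hc
    obtain ⟨hcS, hck⟩ := Finset.mem_filter.1 hc
    have hhead : c ∈ ribbonHeads mu lam :=
      Finset.mem_filter.2 ⟨htop, fun hright => hlinked (Finset.mem_filter.2 ⟨hcS, hright⟩)⟩
    have hfh : c ≠ firstHead mu lam := fun h => by
      rw [h, hT.entry_firstHead hne] at hck
      exact lt_irrefl _ hck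
    exact Finset.mem_union_right _
      (Finset.mem_filter.2 ⟨Finset.mem_erase.2 ⟨hfh, hhead⟩, hck⟩)

theorem isHeadSelection (hT : HasKNE T k) (hne : (skewCells mu lam).Nonempty)
    (hkn : k ≤ skewSize mu lam) :
    IsHeadSelection mu lam k (headSelection k T) := by
  refine ⟨Finset.filter_subset _ _, ?_⟩
  rw [← card_lowCells (Sel := headSelection k T) (Finset.filter_subset _ _),
    hT.lowCells_headSelection hne, T.card_filter_entry_lt (by omega)]

theorem eq_kneTableau (hT : HasKNE T k) (hbr : IsBrokenRibbon mu lam)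
    (hne : (skewCells mu lam).Nonempty) (hkn : k ≤ skewSize mu lam) :
    T = kneTableau hbr (hT.isHeadSelection hne hkn).1 := by
  refine T.eq_ofKey fun c hc d hd hcd => ?_
  have hlow {e : ℕ × ℕ} (he : e ∈ skewCells mu lam) :
      e ∈ lowCells mu lam (headSelection k T) ↔ T.entry e < k := by
    rw [hT.lowCells_headSelection hne, Finset.mem_filter, and_iff_right he]
  have hfh {e : ℕ × ℕ} (he : e ∈ skewCells mu lam) :
      e = firstHead mu lam ↔ T.entry e = k :=
    ⟨fun h => h ▸ hT.entry_firstHead hne,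
      fun h => T.entry_injOn he (firstHead_mem hne) (h.trans (hT.entry_firstHead hne).symm)⟩
  rcases lt_trichotomy (T.entry d) k with hdk | hdk | hdk
  · rw [kneKey_lt_iff_of_mem ((hlow hc).2 (hcd.trans hdk)) ((hlow hd).2 hdk)]
    exact hT.2.1 c hc d hd hcd hdk
  · exact kneKey_lt_of_mem_of_not_mem ((hlow hc).2 (hdk ▸ hcd)) (by rw [hlow hd]; omega)
  · have hdl : d ∉ lowCells mu lam (headSelection k T) := by rw [hlow hd]; omega
    have hdfh : d ≠ firstHead mu lam := by rw [Ne, hfh hd]; omega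
    rcases lt_trichotomy (T.entry c) k with hck | hck | hck
    · exact kneKey_lt_of_mem_of_not_mem ((hlow hc).2 hck) hdl
    · rw [(hfh hc).2 hck]
      refine kneKey_firstHead_lt ?_ hdl hdfh
      rw [hlow (firstHead_mem hne), hT.entry_firstHead hne]
      exact lt_irrefl k
    · rw [kneKey_lt_iff_of_not_mem (by rw [hlow hc]; omega) (by rw [Ne, hfh hc]; omega)
        hdl hdfh]
      exact hT.2.2 c hc d hd hck hcd

end HasKNE

theorem headSelection_kneTableau {Sel : Finset (ℕ × ℕ)} (hbr : IsBrokenRibbon mu lam)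
    (hSel : IsHeadSelection mu lam k Sel) (hk : 1 ≤ k) :
    headSelection k (kneTableau hbr hSel.1) = Sel := by
  ext c
  rw [headSelection, Finset.mem_filter]
  refine ⟨fun ⟨hc, hck⟩ => ?_, fun hc => ⟨hSel.1 hc, ?_⟩⟩
  · have hhead := Finset.mem_of_mem_erase hc
    have hcS := topCells_subset (ribbonHeads_subset_topCells hhead)
    rcases Finset.mem_union.1 ((kneTableau_entry_lt_iff hbr hSel hk hcS).1 hck) with h | h
    · exact absurd h (Finset.disjoint_left.1 disjoint_ribbonHeads_rightLinkedCells hhead)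
    · exact h
  · exact (kneTableau_entry_lt_iff hbr hSel hk (lowCells_subset_skewCells hSel.1
      (Finset.mem_union_right _ hc))).2 (Finset.mem_union_right _ hc)

def kneTableauEquiv (hbr : IsBrokenRibbon mu lam) (hne : (skewCells mu lam).Nonempty)
    (hk : 1 ≤ k) (hkn : k ≤ skewSize mu lam) :
    {T : SkewSYT mu lam // HasKNE T k} ≃ {Sel // IsHeadSelection mu lam k Sel} where
  toFun T := ⟨headSelection k T.1, T.2.isHeadSelection hne hkn⟩
  invFun Sel := ⟨kneTableau hbr Sel.2.1, kneTableau_hasKNE hbr hne Sel.2 hk⟩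
  left_inv T := Subtype.ext (T.2.eq_kneTableau hbr hne hkn).symm
  right_inv Sel := Subtype.ext (headSelection_kneTableau hbr Sel.2 hk)

end HeadSelection

theorem count_kNE_tableaux_general
    (mu lam : YoungDiagram) (hbr : IsBrokenRibbon mu lam)
    (r : ℕ) (hsize : skewSize mu lam = r) (k : ℕ) (hk1 : 1 ≤ k) (hk2 : k ≤ r) :
    Nat.card {T : SkewSYT mu lam // HasKNE T k} =
      if wt mu lam ≤ k - 1 then Nat.choose (rib mu lam - 1) (k - 1 - wt mu lam) else 0 := by
  have hne : (skewCells mu lam).Nonempty := Finset.card_pos.1 (by rw [← skewSize]; omega)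
  rw [Nat.card_congr (kneTableauEquiv hbr hne hk1 (hsize ▸ hk2)), rib_eq_card_ribbonHeads,
    wt_eq_card_rightLinkedCells hbr,
    ← Finset.card_erase_of_mem (firstHead_mem_ribbonHeads hne)]
  exact Finset.card_subsets_card_add_eq _ _ _

/-- **Counting k-NE tableaux on a broken ribbon.** -/
theorem count_kNE_tableaux
    (mu lam : YoungDiagram) (hml : mu ≤ lam) (hbr : IsBrokenRibbon mu lam)
    (r : ℕ) (hsize : skewSize mu lam = r) (hr : 1 ≤ r) (k : ℕ) (hk1 : 1 ≤ k) (hk2 : k ≤ r) :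
    Nat.card {T : SkewSYT mu lam // HasKNE T k} =
      if wt mu lam ≤ k - 1 then Nat.choose (rib mu lam - 1) (k - 1 - wt mu lam) else 0 :=
  count_kNE_tableaux_general mu lam hbr r hsize k hk1 hk2
end
end
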